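/- Let σ ⊂ N_ℚ be a strongly convex rational polyhedral cone, R = ℂ[σ^∨ ∩ M] the corresponding semigroup algebra, ρ an extremal ray of σ, and e ∈ S_ρ. Then the ℂ-linear map ∂_{ρ,e} : R → R sending χ^m to ⟨m,ρ⟩·χ^{e+m} is a locally nilpotent derivation of R, homogeneous of degree e. -/

import Mathlib

namespace Stmt6

variable (n : ℕ)

/-- The pairing `M × N → ℤ`. -/
def pairZ (m v : Fin n → ℤ) : ℤ := ∑ i, m i * v i

def castQ (v : Fin n → ℤ) : Fin n → ℚ := fun i => (v i : ℚ)

/-- Membership in the rational cone generated by `gens ⊆ N`. -/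
def InCone (gens : Finset (Fin n → ℤ)) (v : Fin n → ℚ) : Prop :=
  ∃ c : (Fin n → ℤ) → ℚ, (∀ g, 0 ≤ c g) ∧ v = ∑ g ∈ gens, c g • castQ n g

/-- The dual semigroup `σ^∨ ∩ M` of the cone generated by `gens`. -/
def dualSG (gens : Finset (Fin n → ℤ)) : Set (Fin n → ℤ) :=
  {m | ∀ g ∈ gens, 0 ≤ pairZ n m g}

/-- The homogeneous map `∂_{ρ,e} : χ^m ↦ ⟨m,ρ⟩ χ^{e+m}` on the Laurent polynomial ring
`ℂ[M]`, of degree `e`. -/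
noncomputable def D (ρ e : Fin n → ℤ) :
    AddMonoidAlgebra ℂ (Fin n → ℤ) → AddMonoidAlgebra ℂ (Fin n → ℤ) :=
  fun x => Finsupp.sum x.coeff fun m c =>
    AddMonoidAlgebra.single (e + m) (((pairZ n m ρ : ℤ) : ℂ) * c)

/-- `x` lies in the semigroup algebra `R = ℂ[σ^∨ ∩ M] ⊆ ℂ[M]`. -/
def memR (gens : Finset (Fin n → ℤ)) (x : AddMonoidAlgebra ℂ (Fin n → ℤ)) : Prop :=
  ∀ m ∈ x.coeff.support, m ∈ dualSG n gens

section Derivation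

variable {n : ℕ}

lemma pairZ_add (a b v : Fin n → ℤ) : pairZ n (a + b) v = pairZ n a v + pairZ n b v := by
  simp [pairZ, add_mul, Finset.sum_add_distrib]

lemma pairZ_nsmul (k : ℕ) (a v : Fin n → ℤ) : pairZ n (k • a) v = k * pairZ n a v := by
  simp [pairZ, Finset.mul_sum, mul_assoc]

variable (ρ e : Fin n → ℤ)

lemma D_single (m : Fin n → ℤ) (c : ℂ) :
    D n ρ e (AddMonoidAlgebra.single m c) =
      AddMonoidAlgebra.single (e + m) (((pairZ n m ρ : ℤ) : ℂ) * c) := by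
  simp [D, Finsupp.sum_single_index]

lemma D_zero : D n ρ e 0 = 0 := by
  simp [D]

lemma D_add (x y : AddMonoidAlgebra ℂ (Fin n → ℤ)) :
    D n ρ e (x + y) = D n ρ e x + D n ρ e y := by
  unfold D
  rw [AddMonoidAlgebra.coeff_add, Finsupp.sum_add_index] <;> simp [mul_add]

lemma D_smul (c : ℂ) (x : AddMonoidAlgebra ℂ (Fin n → ℤ)) :
    D n ρ e (c • x) = c • D n ρ e x := by
  unfold D
  rw [AddMonoidAlgebra.coeff_smul, Finsupp.sum_smul_index (by simp), Finsupp.smul_sum]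
  refine Finsupp.sum_congr fun m _ => ?_
  rw [AddMonoidAlgebra.smul_single, smul_eq_mul, mul_left_comm]

lemma isLinearMap_D : IsLinearMap ℂ (D n ρ e) :=
  ⟨D_add ρ e, D_smul ρ e⟩

lemma D_single_mul_single (m m' : Fin n → ℤ) (c c' : ℂ) :
    D n ρ e (AddMonoidAlgebra.single m c * AddMonoidAlgebra.single m' c') =
      D n ρ e (AddMonoidAlgebra.single m c) * AddMonoidAlgebra.single m' c' +
        AddMonoidAlgebra.single m c * D n ρ e (AddMonoidAlgebra.single m' c') := by
  simp only [AddMonoidAlgebra.single_mul_single, D_single]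
  rw [add_assoc, add_left_comm m e m', ← AddMonoidAlgebra.single_add, pairZ_add]
  congr 1
  push_cast
  ring

lemma D_mul (x y : AddMonoidAlgebra ℂ (Fin n → ℤ)) :
    D n ρ e (x * y) = D n ρ e x * y + x * D n ρ e y := by
  induction x using AddMonoidAlgebra.induction_linear with
  | zero => simp [D_zero]
  | add a b ha hb => rw [add_mul, D_add, D_add, ha, hb]; ring
  | single m c =>
    induction y using AddMonoidAlgebra.induction_linear with
    | zero => simp [D_zero]
    | add a b ha hb => rw [mul_add, D_add, D_add, ha, hb]; ring
    | single m' c' => exact D_single_mul_single ρ e m m' c c'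

lemma exists_of_mem_support_D {x : AddMonoidAlgebra ℂ (Fin n → ℤ)} {m' : Fin n → ℤ}
    (hm' : m' ∈ (D n ρ e x).coeff.support) :
    ∃ m ∈ x.coeff.support, pairZ n m ρ ≠ 0 ∧ m' = e + m := by
  classical
  rw [D, AddMonoidAlgebra.coeff_finsuppSum] at hm'
  obtain ⟨m, hm, hmem⟩ := Finset.mem_biUnion.mp (Finsupp.support_sum hm')
  rw [AddMonoidAlgebra.coeff_single] at hmem
  obtain ⟨rfl, hc⟩ := Finsupp.mem_support_single _ _ _ |>.mp hmem
  exact ⟨m, hm, fun h => hc (by simp [h]), rfl⟩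

lemma exists_of_mem_support_iterate_D {x : AddMonoidAlgebra ℂ (Fin n → ℤ)} (k : ℕ)
    {m' : Fin n → ℤ} (hm' : m' ∈ ((D n ρ e)^[k] x).coeff.support) :
    ∃ m ∈ x.coeff.support, m' = k • e + m := by
  induction k generalizing m' with
  | zero => exact ⟨m', hm', by simp⟩
  | succ k ih =>
    rw [Function.iterate_succ_apply'] at hm'
    obtain ⟨m₁, hm₁, -, rfl⟩ := exists_of_mem_support_D ρ e hm'
    obtain ⟨m, hm, rfl⟩ := ih hm₁
    exact ⟨m, hm, by rw [succ_nsmul]; abel⟩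

/-- The monomials of `∂^k x` have `g`-degree at most `max_{m ∈ supp x} ⟨m, g⟩ + k ⟨e, g⟩`,
which is negative for large `k` when `⟨e, g⟩ < 0`. -/
lemma exists_iterate_D_eq_zero {g : Fin n → ℤ} (hg : pairZ n e g < 0)
    (x : AddMonoidAlgebra ℂ (Fin n → ℤ))
    (hx : ∀ k, ∀ m ∈ ((D n ρ e)^[k] x).coeff.support, 0 ≤ pairZ n m g) :
    ∃ k : ℕ, (D n ρ e)^[k] x = 0 := by
  set S : ℕ := x.coeff.support.sup fun m => (pairZ n m g).toNat
  refine ⟨S + 1, ?_⟩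
  rw [← AddMonoidAlgebra.coeff_eq_zero, ← Finsupp.support_eq_empty,
    Finset.eq_empty_iff_forall_notMem]
  intro m' hm'
  have hnonneg := hx _ m' hm'
  obtain ⟨m, hm, rfl⟩ := exists_of_mem_support_iterate_D ρ e _ hm'
  have hmS : pairZ n m g ≤ S := (Int.self_le_toNat _).trans <| by
    exact_mod_cast Finset.le_sup (f := fun m => (pairZ n m g).toNat) hm
  rw [pairZ_add, pairZ_nsmul] at hnonneg
  push_cast at hnonneg
  nlinarith

variable {gens : Finset (Fin n → ℤ)}

lemma mapsTo_D (hE : ∀ m ∈ dualSG n gens, pairZ n m ρ ≠ 0 → e + m ∈ dualSG n gens) :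
    Set.MapsTo (D n ρ e) {x | memR n gens x} {x | memR n gens x} := by
  intro x hx m' hm'
  obtain ⟨m, hm, hne, rfl⟩ := exists_of_mem_support_D ρ e hm'
  exact hE m (hx m hm) hne

lemma exists_pairZ_neg_of_notMem_dualSG (he : e ∉ dualSG n gens) :
    ∃ g ∈ gens, pairZ n e g < 0 := by
  simpa [dualSG] using he

end Derivation

theorem stmt_6 (gens : Finset (Fin n → ℤ))
    (ρ : Fin n → ℤ)
    (e : Fin n → ℤ)
    (he : e ∉ dualSG n gens ∧
      ∀ m ∈ dualSG n gens, pairZ n m ρ ≠ 0 → e + m ∈ dualSG n gens) :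
    -- ∂ is ℂ-linear
    IsLinearMap ℂ (D n ρ e) ∧
    -- ∂ is homogeneous of degree `e`
    (∀ (m : Fin n → ℤ) (c : ℂ), D n ρ e (AddMonoidAlgebra.single m c) =
        AddMonoidAlgebra.single (e + m) (((pairZ n m ρ : ℤ) : ℂ) * c)) ∧
    -- ∂ maps `R` into `R`
    (∀ x, memR n gens x → memR n gens (D n ρ e x)) ∧
    -- Leibniz rule on `R`
    (∀ x y, memR n gens x → memR n gens y →
        D n ρ e (x * y) = D n ρ e x * y + x * D n ρ e y) ∧
    -- local nilpotency on `R`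
    (∀ x, memR n gens x → ∃ k : ℕ, (D n ρ e)^[k] x = 0) := by
  obtain ⟨heR, hE⟩ := he
  obtain ⟨g, hg, hneg⟩ := exists_pairZ_neg_of_notMem_dualSG e heR
  refine ⟨isLinearMap_D ρ e, D_single ρ e, mapsTo_D ρ e hE,
    fun x y _ _ => D_mul ρ e x y, fun x hx => exists_iterate_D_eq_zero ρ e hneg x ?_⟩
  intro k m hm
  exact ((mapsTo_D ρ e hE).iterate k hx) m hm g hg

end Stmt6
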